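/- arXiv:2306.13064 — 2 statements merged into one kernel-verified Lean document; each statement's English description precedes it below -/
import Mathlib

section
/- Sufficiency lemma (the paper's sufficiency-violation result, stated in its valid direction): Let (Ω, 𝓕, μ) be a probability space with Ω a standard Borel space, and let Y (outcomes), P (predictions), A (protected-class membership), and X (covariates) be measurable random variables on Ω taking values in standard Borel spaces. If the sufficiency fairness definition holds, i.e., Y is conditionally independent of A given the σ-algebra generated by the pair (P, X), and moreover the predictions are conditionally independent of the outcomes given the covariates, i.e., Y is conditionally independent of P given the σ-algebra generated by X, then there is no base-rate difference between protected and non-protected class conditional on the covariates, i.e., Y is conditionally independent of A given the σ-algebra generated by X. Equivalently, if Y is not conditionally independent of A given X, then sufficiency (Y conditionally independent of A given (P, X)) can hold only if Y is not conditionally independent of P given X. -/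
/-!
`Y ⟂ P | X` means that conditioning an event `{Y ∈ s}` on `σ(P, X) = σ(X) ⊔ σ(P)` gives the same
result as conditioning it on `σ(X)` alone: on the π-system of sets `{X ∈ v} ∩ {P ∈ u}` the two
have the same integrals, by the pull-out property and the factorisation of
`μ⟦Y ∈ s, P ∈ u | X⟧`. Under sufficiency, therefore,
`μ⟦Y ∈ s, A ∈ t | P, X⟧ = μ⟦Y ∈ s | X⟧ μ⟦A ∈ t | P, X⟧`, and conditioning this on `σ(X)`
(tower property, pulling out the `σ(X)`-measurable factor) gives
`μ⟦Y ∈ s, A ∈ t | X⟧ = μ⟦Y ∈ s | X⟧ μ⟦A ∈ t | X⟧`.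
-/

open MeasureTheory ProbabilityTheory MeasurableSpace Set

lemma IsPiSystem.image2_inter {α : Type*} {C D : Set (Set α)} (hC : IsPiSystem C)
    (hD : IsPiSystem D) : IsPiSystem (image2 (· ∩ ·) C D) := by
  rintro _ ⟨s₁, hs₁, t₁, ht₁, rfl⟩ _ ⟨s₂, hs₂, t₂, ht₂, rfl⟩ hst
  rw [inter_inter_inter_comm] at hst ⊢
  exact mem_image2_of_mem (hC _ hs₁ _ hs₂ (hst.mono inter_subset_left))
    (hD _ ht₁ _ ht₂ (hst.mono inter_subset_right))

lemma MeasurableSpace.sup_eq_generateFrom_image2_inter {α : Type*} (m₁ m₂ : MeasurableSpace α) :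
    m₁ ⊔ m₂ = generateFrom (image2 (· ∩ ·) {s | MeasurableSet[m₁] s} {t | MeasurableSet[m₂] t}) :=
  le_antisymm
    (sup_le (fun s hs ↦ measurableSet_generateFrom ⟨s, hs, univ, .univ, inter_univ s⟩)
      (fun t ht ↦ measurableSet_generateFrom ⟨univ, .univ, t, ht, univ_inter t⟩))
    (generateFrom_le <| by
      rintro _ ⟨s, hs, t, ht, rfl⟩
      exact (le_sup_left (b := m₂) _ hs).inter (le_sup_right (a := m₁) _ ht))

namespace MeasureTheory

variable {α E : Type*} [NormedAddCommGroup E] [NormedSpace ℝ E] [CompleteSpace E]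
  {m m₀ : MeasurableSpace α} {μ : Measure α}

theorem ae_eq_condExp_of_forall_setIntegral_eq_of_isPiSystem (hm : m ≤ m₀)
    [SigmaFinite (μ.trim hm)] {p : Set (Set α)} (h_gen : m = generateFrom p)
    (h_pi : IsPiSystem p) (h_univ : univ ∈ p) {f g : α → E} (hf : Integrable f μ)
    (hg : Integrable g μ) (hg_meas : AEStronglyMeasurable[m] g μ)
    (h_eq : ∀ t ∈ p, ∫ x in t, g x ∂μ = ∫ x in t, f x ∂μ) :
    g =ᵐ[μ] μ[f | m] := by
  have h_sets (t : Set α) (ht : MeasurableSet[m] t) :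
      ∫ x in t, g x ∂μ = ∫ x in t, f x ∂μ := by
    induction t, ht using induction_on_inter h_gen h_pi with
    | empty => simp
    | basic t ht => exact h_eq t ht
    | compl t ht ih =>
      have h_total := h_eq univ h_univ
      rw [setIntegral_univ, setIntegral_univ] at h_total
      rw [setIntegral_compl (hm t ht) hg, setIntegral_compl (hm t ht) hf, ih, h_total]
    | iUnion t hdisj ht ih =>
      rw [integral_iUnion (fun i ↦ hm _ (ht i)) hdisj hg.integrableOn,
        integral_iUnion (fun i ↦ hm _ (ht i)) hdisj hf.integrableOn]
      exact tsum_congr ih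
  exact ae_eq_condExp_of_forall_setIntegral_eq hm hf (fun _ _ _ ↦ hg.integrableOn)
    (fun t ht _ ↦ h_sets t ht) hg_meas

end MeasureTheory

namespace ProbabilityTheory

section

variable {Ω : Type*} {m mΩ : MeasurableSpace Ω} {μ : Measure Ω}

theorem ae_norm_condExp_indicator_le_one (s : Set Ω) : ∀ᵐ ω ∂μ, ‖(μ⟦s | m⟧) ω‖ ≤ 1 := by
  have h_ind : ∀ᵐ ω ∂μ, |s.indicator (fun _ ↦ (1 : ℝ)) ω| ≤ 1 :=
    Filter.Eventually.of_forall fun ω ↦ by by_cases hω : ω ∈ s <;> simp [hω]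
  simpa only [Real.norm_eq_abs] using ae_bdd_abs_condExp_of_ae_bdd_abs h_ind

theorem setIntegral_condExp_indicator_one [IsFiniteMeasure μ] (hm : m ≤ mΩ) {s t : Set Ω}
    (hs : MeasurableSet s) (ht : MeasurableSet[m] t) :
    ∫ ω in t, (μ⟦s | m⟧) ω ∂μ = μ.real (t ∩ s) := by
  rw [setIntegral_condExp hm ((integrable_const 1).indicator hs) ht, setIntegral_indicator hs,
    setIntegral_const, smul_eq_mul, mul_one]

end

variable {Ω : Type*} {m m₁ m₂ m₃ : MeasurableSpace Ω} {mΩ : MeasurableSpace Ω}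
  [StandardBorelSpace Ω] {μ : Measure Ω} [IsFiniteMeasure μ]

theorem CondIndep.condExp_sup_ae_eq (hm : m ≤ mΩ) (hm₁ : m₁ ≤ mΩ) (hm₂ : m₂ ≤ mΩ)
    (h : CondIndep m m₁ m₂ hm μ) {s : Set Ω} (hs : MeasurableSet[m₁] s) :
    μ⟦s | m ⊔ m₂⟧ =ᵐ[μ] μ⟦s | m⟧ := by
  refine (ae_eq_condExp_of_forall_setIntegral_eq_of_isPiSystem (sup_le hm hm₂)
    (sup_eq_generateFrom_image2_inter m m₂)
    ((@isPiSystem_measurableSet Ω m).image2_inter (@isPiSystem_measurableSet Ω m₂))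
    ⟨univ, .univ, univ, .univ, inter_univ univ⟩ ((integrable_const 1).indicator (hm₁ s hs))
    integrable_condExp
    (stronglyMeasurable_condExp.mono (le_sup_left : m ≤ m ⊔ m₂)).aestronglyMeasurable ?_).symm
  rintro _ ⟨t, ht, u, hu, rfl⟩
  have hu_int : Integrable (u.indicator fun _ ↦ (1 : ℝ)) μ :=
    (integrable_const 1).indicator (hm₂ u hu)
  have h_pull : μ[μ⟦s | m⟧ * u.indicator (fun _ ↦ 1) | m] =ᵐ[μ] μ⟦s | m⟧ * μ⟦u | m⟧ :=
    condExp_stronglyMeasurable_mul_of_bound hm stronglyMeasurable_condExp hu_int 1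
      (ae_norm_condExp_indicator_le_one s)
  have h_indep : μ⟦s ∩ u | m⟧ =ᵐ[μ] μ⟦s | m⟧ * μ⟦u | m⟧ :=
    (condIndep_iff m m₁ m₂ hm hm₁ hm₂ μ).1 h s u hs hu
  calc ∫ ω in t ∩ u, (μ⟦s | m⟧) ω ∂μ
      = ∫ ω in t, (μ⟦s | m⟧ * u.indicator (fun _ ↦ (1 : ℝ))) ω ∂μ := by
        rw [← setIntegral_indicator (hm₂ u hu)]
        simp only [Pi.mul_apply, ← Set.indicator_mul_right, mul_one]
    _ = ∫ ω in t, (μ⟦s ∩ u | m⟧) ω ∂μ := by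
        refine (setIntegral_condExp hm (hu_int.bdd_mul integrable_condExp.aestronglyMeasurable
          (ae_norm_condExp_indicator_le_one s)) ht).symm.trans (setIntegral_congr_ae (hm t ht) ?_)
        filter_upwards [h_pull, h_indep] with ω h₁ h₂ _ using h₁.trans h₂.symm
    _ = ∫ ω in t ∩ u, s.indicator (fun _ ↦ 1) ω ∂μ := by
        rw [setIntegral_condExp_indicator_one hm ((hm₁ s hs).inter (hm₂ u hu)) ht,
          setIntegral_indicator (hm₁ s hs), setIntegral_const, smul_eq_mul, mul_one,
          inter_assoc, inter_comm s]

theorem CondIndep.of_condIndep_sup (hm : m ≤ mΩ) (hm₁ : m₁ ≤ mΩ) (hm₂ : m₂ ≤ mΩ)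
    (hm₃ : m₃ ≤ mΩ) (h₁₂ : CondIndep m m₁ m₂ hm μ)
    (h₁₃ : CondIndep (m ⊔ m₂) m₁ m₃ (sup_le hm hm₂) μ) : CondIndep m m₁ m₃ hm μ := by
  have hm_le : m ≤ m ⊔ m₂ := le_sup_left
  rw [condIndep_iff _ _ _ _ hm₁ hm₃] at h₁₃ ⊢
  intro s t hs ht
  calc μ⟦s ∩ t | m⟧
      =ᵐ[μ] μ[μ⟦s ∩ t | m ⊔ m₂⟧ | m] := (condExp_condExp_of_le hm_le (sup_le hm hm₂)).symm
    _ =ᵐ[μ] μ[μ⟦s | m ⊔ m₂⟧ * μ⟦t | m ⊔ m₂⟧ | m] := condExp_congr_ae (h₁₃ s t hs ht)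
    _ =ᵐ[μ] μ[μ⟦s | m⟧ * μ⟦t | m ⊔ m₂⟧ | m] :=
        condExp_congr_ae ((h₁₂.condExp_sup_ae_eq hm hm₁ hm₂ hs).mul .rfl)
    _ =ᵐ[μ] μ⟦s | m⟧ * μ[μ⟦t | m ⊔ m₂⟧ | m] :=
        condExp_stronglyMeasurable_mul_of_bound hm stronglyMeasurable_condExp integrable_condExp
          1 (ae_norm_condExp_indicator_le_one s)
    _ =ᵐ[μ] μ⟦s | m⟧ * μ⟦t | m⟧ := .mul .rfl (condExp_condExp_of_le hm_le (sup_le hm hm₂))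

end ProbabilityTheory

theorem sufficiency_lemma_general
    {Ω : Type*} [MeasurableSpace Ω] [StandardBorelSpace Ω]
    {μ : Measure Ω} [IsProbabilityMeasure μ]
    {EY EP EA EX : Type*}
    [MeasurableSpace EY]
    [MeasurableSpace EP]
    [MeasurableSpace EA]
    [MeasurableSpace EX]
    {Y : Ω → EY} {P : Ω → EP} {A : Ω → EA} {X : Ω → EX}
    (hY : Measurable Y) (hP : Measurable P) (hA : Measurable A) (hX : Measurable X)
    (hsuff : CondIndepFun (MeasurableSpace.comap (fun ω => (P ω, X ω)) inferInstance)
      (Measurable.comap_le (hP.prodMk hX)) Y A μ)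
    (hYP : CondIndepFun (MeasurableSpace.comap X inferInstance) hX.comap_le Y P μ) :
    CondIndepFun (MeasurableSpace.comap X inferInstance) hX.comap_le Y A μ := by
  rw [condIndepFun_iff_condIndep] at hsuff hYP ⊢
  have hsuff' : CondIndep (.comap X inferInstance ⊔ .comap P inferInstance)
      (.comap Y inferInstance) (.comap A inferInstance) (sup_le hX.comap_le hP.comap_le) μ := by
    convert hsuff using 1
    exact (sup_comm _ _).trans (comap_prodMk P X).symm
  exact hYP.of_condIndep_sup hX.comap_le hY.comap_le hP.comap_le hA.comap_le hsuff'

/-- Sufficiency lemma: if sufficiency holds (`Y ⟂ A | σ(P, X)`) and the predictions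
carry no information about the outcomes beyond the covariates (`Y ⟂ P | σ(X)`),
then there is no base-rate difference conditional on the covariates (`Y ⟂ A | σ(X)`). -/
theorem sufficiency_lemma
    {Ω : Type*} [MeasurableSpace Ω] [StandardBorelSpace Ω]
    {μ : Measure Ω} [IsProbabilityMeasure μ]
    {EY EP EA EX : Type*}
    [MeasurableSpace EY] [StandardBorelSpace EY]
    [MeasurableSpace EP] [StandardBorelSpace EP]
    [MeasurableSpace EA] [StandardBorelSpace EA]
    [MeasurableSpace EX] [StandardBorelSpace EX]
    {Y : Ω → EY} {P : Ω → EP} {A : Ω → EA} {X : Ω → EX}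
    (hY : Measurable Y) (hP : Measurable P) (hA : Measurable A) (hX : Measurable X)
    (hsuff : CondIndepFun (MeasurableSpace.comap (fun ω => (P ω, X ω)) inferInstance)
      (Measurable.comap_le (hP.prodMk hX)) Y A μ)
    (hYP : CondIndepFun (MeasurableSpace.comap X inferInstance) hX.comap_le Y P μ) :
    CondIndepFun (MeasurableSpace.comap X inferInstance) hX.comap_le Y A μ :=
  sufficiency_lemma_general hY hP hA hX hsuff hYP
end

section
/- Bound on the number of candidate subsets in the interval scan: Let n ≥ 1 and let a, b : Fin n → ℝ with a i < b i for every i. For θ ∈ ℝ define S(θ) = {i : a i < θ and θ < b i}. Then the number of distinct nonempty sets in the image {S(θ) : θ ∈ ℝ} is at most 2n − 1. -/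
/-!
Sweep `θ` upwards and count the endpoints already passed: `endpointRank a b θ` is the number of
left endpoints `a i < θ` plus the number of right endpoints `b i ≤ θ`. The sets of passed
endpoints only grow with `θ`, so two parameters with the same count have passed exactly the same
endpoints and hence give the same set `S(θ)`. When `S(θ)` is nonempty, some `a i` has been
passed and some `b i` has not, so the count lies in `[1, 2n - 1]`.
-/

open Finset Function

theorem Finset.eq_and_eq_of_subset_of_card_add_le {β : Type*} {s s' t t' : Finset β}
    (hs : s ⊆ s') (ht : t ⊆ t') (hcard : #s' + #t' ≤ #s + #t) : s = s' ∧ t = t' := by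
  have := card_le_card hs
  have := card_le_card ht
  exact ⟨eq_of_subset_of_card_le hs (by omega), eq_of_subset_of_card_le ht (by omega)⟩

theorem Set.ncard_image_le_ncard_image_of_factorsThrough {α β γ : Type*} {f : α → β}
    {g : α → γ} (hfg : FactorsThrough f g) (s : Set α) (hs : (g '' s).Finite) :
    (f '' s).ncard ≤ (g '' s).ncard := by
  obtain rfl | ⟨x, -⟩ := s.eq_empty_or_nonempty
  · simp
  have hfactor : f '' s = extend g f (fun _ => f x) '' (g '' s) := by
    rw [Set.image_image]
    exact Set.image_congr fun y _ => (hfg.extend_apply _ y).symm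
  exact hfactor ▸ Set.ncard_image_le hs

namespace IntervalScan

variable {ι α : Type*} [Fintype ι] [LinearOrder α] (a b : ι → α)

def endpointRank (θ : α) : ℕ :=
  #{i | a i < θ} + #{i | b i ≤ θ}

variable {a b}

theorem setOf_eq_of_endpointRank_eq_of_le {θ θ' : α} (hle : θ ≤ θ')
    (hrank : endpointRank a b θ = endpointRank a b θ') :
    {i | a i < θ ∧ θ < b i} = {i | a i < θ' ∧ θ' < b i} := by
  obtain ⟨hleft, hright⟩ := Finset.eq_and_eq_of_subset_of_card_add_le
    (s := {i | a i < θ}) (s' := {i | a i < θ'}) (t := {i | b i ≤ θ}) (t' := {i | b i ≤ θ'})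
    (monotone_filter_right _ fun _ _ h => h.trans_le hle)
    (monotone_filter_right _ fun _ _ h => h.trans hle) hrank.ge
  ext i
  have hai : a i < θ ↔ a i < θ' := by simpa using congrArg (i ∈ ·) hleft
  have hbi : b i ≤ θ ↔ b i ≤ θ' := by simpa using congrArg (i ∈ ·) hright
  simp only [Set.mem_ofPred_eq, hai, lt_iff_not_ge (a := θ), lt_iff_not_ge (a := θ'), hbi]

theorem factorsThrough_endpointRank :
    FactorsThrough (fun θ => {i | a i < θ ∧ θ < b i}) (endpointRank a b) := by
  intro θ θ' hrank
  rcases le_total θ θ' with hle | hle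
  · exact setOf_eq_of_endpointRank_eq_of_le hle hrank
  · exact (setOf_eq_of_endpointRank_eq_of_le hle hrank.symm).symm

theorem endpointRank_mem_Icc {θ : α} (hne : {i | a i < θ ∧ θ < b i}.Nonempty) :
    endpointRank a b θ ∈ Set.Icc 1 (2 * Fintype.card ι - 1) := by
  obtain ⟨i, hai, hib⟩ := hne
  have hleft_pos : 0 < #{j | a j < θ} := card_pos.mpr ⟨i, by simpa using hai⟩
  have hleft_le : #{j | a j < θ} ≤ Fintype.card ι := card_filter_le _ _
  have hright_lt : #{j | b j ≤ θ} < Fintype.card ι :=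
    card_lt_univ_of_notMem (x := i) (by simpa using hib)
  simp only [endpointRank, Set.mem_Icc]
  omega

end IntervalScan

open IntervalScan in
theorem interval_scan_candidate_bound_general (n : ℕ) (a b : Fin n → ℝ) :
    Set.ncard {s : Set (Fin n) | s.Nonempty ∧
        ∃ θ : ℝ, s = {i | a i < θ ∧ θ < b i}} ≤ 2 * n - 1 := by
  set S : ℝ → Set (Fin n) := fun θ => {i | a i < θ ∧ θ < b i}
  have hcandidates : {s : Set (Fin n) | s.Nonempty ∧ ∃ θ : ℝ, s = S θ} =
      S '' {θ | (S θ).Nonempty} := by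
    ext s
    constructor
    · rintro ⟨hne, θ, rfl⟩
      exact ⟨θ, hne, rfl⟩
    · rintro ⟨θ, hne, rfl⟩
      exact ⟨hne, θ, rfl⟩
  have hrank : endpointRank a b '' {θ | (S θ).Nonempty} ⊆ Set.Icc 1 (2 * n - 1) := by
    rintro _ ⟨θ, hne, rfl⟩
    simpa using endpointRank_mem_Icc hne
  calc _ = (S '' {θ | (S θ).Nonempty}).ncard := by rw [hcandidates]
    _ ≤ (endpointRank a b '' {θ | (S θ).Nonempty}).ncard :=
      Set.ncard_image_le_ncard_image_of_factorsThrough factorsThrough_endpointRank _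
        ((Set.finite_Icc _ _).subset hrank)
    _ ≤ (Set.Icc 1 (2 * n - 1)).ncard := Set.ncard_le_ncard hrank (Set.finite_Icc _ _)
    _ = 2 * n - 1 := by simp [Set.ncard_eq_toFinset_card']

/-- Bound on the number of candidate subsets in the interval scan: for `n` intervals
`(a i, b i)`, the collection of distinct nonempty sets of the form
`S(θ) = {i : a i < θ ∧ θ < b i}` has at most `2n − 1` elements. -/
theorem interval_scan_candidate_bound (n : ℕ) (hn : 1 ≤ n) (a b : Fin n → ℝ)
    (hab : ∀ i, a i < b i) :
    Set.ncard {s : Set (Fin n) | s.Nonempty ∧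
        ∃ θ : ℝ, s = {i | a i < θ ∧ θ < b i}} ≤ 2 * n - 1 :=
  interval_scan_candidate_bound_general n a b
end
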